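/- arXiv:1810.10775 — 4 statements merged into one kernel-verified Lean document; each statement's English description precedes it below -/
import Mathlib

section
/- Let D be a nonempty finite set, let f, ucb, lcb : D → ℝ satisfy lcb(x) ≤ f(x) ≤ ucb(x) for all x ∈ D, and let Δ : D → Set D assign to each x a nonempty finite set of 'perturbed' points. Define g(x) = min_{x' ∈ Δ(x)} f(x'). Suppose x̃ maximizes x ↦ min_{x' ∈ Δ(x)} ucb(x') over D, and δ̃ ∈ Δ(x̃) minimizes lcb over Δ(x̃). Then max_{x ∈ D} g(x) − g(x̃) ≤ ucb(δ̃) − lcb(δ̃). -/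
/-! For every `x`, `min_{Δ x} f ≤ min_{Δ x} ucb ≤ min_{Δ x̃} ucb ≤ ucb δ̃`, so the best robust value
is at most `ucb δ̃`; and `lcb δ̃ = min_{Δ x̃} lcb ≤ min_{Δ x̃} f = g x̃`. -/

open Finset

namespace Finset

variable {ι D α : Type*}

theorem sup'_inf'_le_of_isMaxOn_inf' [Lattice α] {s : Finset ι} (hs : s.Nonempty)
    (Δ : ι → Finset D) (hΔ : ∀ x, (Δ x).Nonempty) {f u : D → α} (hfu : ∀ y, f y ≤ u y)
    {xt : ι} (hxt : IsMaxOn (fun x => (Δ x).inf' (hΔ x) u) s xt) {δ : D} (hδ : δ ∈ Δ xt) :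
    s.sup' hs (fun x => (Δ x).inf' (hΔ x) f) ≤ u δ :=
  sup'_le _ _ fun x hx => calc
    (Δ x).inf' (hΔ x) f ≤ (Δ x).inf' (hΔ x) u := inf'_mono_fun fun y _ => hfu y
    _ ≤ (Δ xt).inf' (hΔ xt) u := hxt hx
    _ ≤ u δ := inf'_le u hδ

theorem le_inf'_of_isMinOn [SemilatticeInf α] {s : Finset D} (hs : s.Nonempty) {l f : D → α}
    (hlf : ∀ y ∈ s, l y ≤ f y) {δ : D} (hδ : IsMinOn l s δ) : l δ ≤ s.inf' hs f :=
  le_inf' _ _ fun y hy => (hδ hy).trans (hlf y hy)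

end Finset

/-- StableOpt per-round regret bound: if `ucb`/`lcb` sandwich `f`, `x̃` maximizes the robust
upper confidence bound and `δ̃ ∈ Δ x̃` minimizes `lcb` over `Δ x̃`, then the ε-regret of `x̃`
is bounded by the confidence width at `δ̃`. -/
theorem stableopt_per_round_regret
    {D : Type*} [Fintype D] [Nonempty D]
    (f ucb lcb : D → ℝ)
    (hconf : ∀ x, lcb x ≤ f x ∧ f x ≤ ucb x)
    (Δ : D → Finset D) (hΔ : ∀ x, (Δ x).Nonempty)
    (xt δt : D)
    (hxt : ∀ x : D, (Δ x).inf' (hΔ x) ucb ≤ (Δ xt).inf' (hΔ xt) ucb)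
    (hδmem : δt ∈ Δ xt)
    (hδt : ∀ y ∈ Δ xt, lcb δt ≤ lcb y) :
    Finset.univ.sup' Finset.univ_nonempty (fun x => (Δ x).inf' (hΔ x) f)
      - (Δ xt).inf' (hΔ xt) f ≤ ucb δt - lcb δt := by
  have hbest : univ.sup' univ_nonempty (fun x => (Δ x).inf' (hΔ x) f) ≤ ucb δt :=
    sup'_inf'_le_of_isMaxOn_inf' univ_nonempty Δ hΔ (fun y => (hconf y).2) (fun x _ => hxt x)
      hδmem
  have hchosen : lcb δt ≤ (Δ xt).inf' (hΔ xt) f :=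
    le_inf'_of_isMinOn (hΔ xt) (fun y _ => (hconf y).1) hδt
  exact sub_le_sub hbest hchosen
end

section
/- Let σ_0, σ_1, …, σ_{T−1} be reals in [0,1] and σ² > 0. If ∑_{t=1}^T log(1 + σ^{−2} σ_{t−1}²) ≤ 2γ, then ∑_{t=1}^T σ_{t−1}² ≤ (2γ) / log(1 + σ^{−2}), and hence by Cauchy–Schwarz, ∑_{t=1}^T σ_{t−1} ≤ √(T · 2γ / log(1 + σ^{−2})). -/
open Finset

lemma log_concave_aux (c u : ℝ) (hc : 0 < c) (hu0 : 0 ≤ u) (hu1 : u ≤ 1) :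
    u * Real.log (1 + c) ≤ Real.log (1 + c * u) := by
  have hcon := strictConcaveOn_log_Ioi.concaveOn
  have h1 : (1 : ℝ) ∈ Set.Ioi (0:ℝ) := by norm_num
  have h2 : (1 + c) ∈ Set.Ioi (0:ℝ) := by simp; linarith
  have := hcon.2 h2 h1 hu0 (by linarith : (0:ℝ) ≤ 1 - u) (by ring)
  simp only [smul_eq_mul, Real.log_one, mul_zero, add_zero] at this
  have heq : u * (1 + c) + (1 - u) * 1 = 1 + c * u := by ring
  rw [heq] at this
  exact this

/-- Information-gain bound on the sum of posterior variances and (via Cauchy–Schwarz) of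
posterior standard deviations. -/
theorem sum_posterior_stddev_bound
    (T : ℕ) (σs : Fin T → ℝ) (hσs : ∀ t, σs t ∈ Set.Icc (0 : ℝ) 1)
    (σ2 : ℝ) (hσ2 : 0 < σ2) (γ : ℝ)
    (h : ∑ t, Real.log (1 + σ2⁻¹ * (σs t) ^ 2) ≤ 2 * γ) :
    (∑ t, (σs t) ^ 2 ≤ (2 * γ) / Real.log (1 + σ2⁻¹)) ∧
    (∑ t, σs t ≤ Real.sqrt ((T : ℝ) * (2 * γ) / Real.log (1 + σ2⁻¹))) := by
  have hc : 0 < σ2⁻¹ := inv_pos.mpr hσ2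
  have hL : 0 < Real.log (1 + σ2⁻¹) := Real.log_pos (by linarith)
  have hterm : ∀ t, (σs t) ^ 2 * Real.log (1 + σ2⁻¹)
      ≤ Real.log (1 + σ2⁻¹ * (σs t) ^ 2) := by
    intro t
    obtain ⟨h0, h1⟩ := hσs t
    exact log_concave_aux σ2⁻¹ ((σs t) ^ 2) hc (by positivity)
      (by nlinarith)
  have hsum : (∑ t, (σs t) ^ 2) * Real.log (1 + σ2⁻¹) ≤ 2 * γ := by
    rw [Finset.sum_mul]
    exact le_trans (Finset.sum_le_sum fun t _ => hterm t) h
  have part1 : ∑ t, (σs t) ^ 2 ≤ (2 * γ) / Real.log (1 + σ2⁻¹) :=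
    (le_div_iff₀ hL).mpr hsum
  refine ⟨part1, ?_⟩
  have hCS : (∑ t, σs t) ^ 2 ≤ (T : ℝ) * ∑ t, (σs t) ^ 2 := by
    simpa using sq_sum_le_card_mul_sum_sq (s := Finset.univ) (f := σs)
  have hnn : 0 ≤ ∑ t, σs t := Finset.sum_nonneg fun t _ => (hσs t).1
  have h2 : (∑ t, σs t) ^ 2 ≤ (T : ℝ) * (2 * γ) / Real.log (1 + σ2⁻¹) := by
    calc (∑ t, σs t) ^ 2 ≤ (T : ℝ) * ∑ t, (σs t) ^ 2 := hCS
      _ ≤ (T : ℝ) * ((2 * γ) / Real.log (1 + σ2⁻¹)) := by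
          exact mul_le_mul_of_nonneg_left part1 (Nat.cast_nonneg T)
      _ = (T : ℝ) * (2 * γ) / Real.log (1 + σ2⁻¹) := by ring
  calc ∑ t, σs t = Real.sqrt ((∑ t, σs t) ^ 2) := (Real.sqrt_sq hnn).symm
    _ ≤ Real.sqrt ((T : ℝ) * (2 * γ) / Real.log (1 + σ2⁻¹)) := Real.sqrt_le_sqrt h2
end

section
/- Let D be a nonempty finite set partitioned into nonempty groups G_1, …, G_k, and let f, ucb, lcb : D → ℝ with lcb(x) ≤ f(x) ≤ ucb(x) for all x. Suppose G maximizes G' ↦ min_{x ∈ G'} ucb(x) over the groups, and x̂ ∈ G minimizes lcb over G. Then max_{G'} min_{x ∈ G'} f(x) − min_{x ∈ G} f(x) ≤ ucb(x̂) − lcb(x̂). -/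
open Finset

/-- Grouped-robust per-round regret bound for StableOpt: if the confidence bounds sandwich
`f`, `Gstar` maximizes the group-wise min of `ucb`, and `x̂` minimizes `lcb` within `Gstar`,
then the max-min regret of `Gstar` is bounded by the confidence width at `x̂`. -/
theorem grouped_stableopt_regret
    {D : Type*} [Fintype D] [Nonempty D]
    {ι : Type*} [Fintype ι] [Nonempty ι]
    (G : ι → Finset D) (hGne : ∀ i, (G i).Nonempty)
    (hpart : ∀ x : D, ∃! i : ι, x ∈ G i)
    (f ucb lcb : D → ℝ)
    (hconf : ∀ x, lcb x ≤ f x ∧ f x ≤ ucb x)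
    (istar : ι) (xhat : D)
    (histar : ∀ i : ι, (G i).inf' (hGne i) ucb ≤ (G istar).inf' (hGne istar) ucb)
    (hxmem : xhat ∈ G istar)
    (hxhat : ∀ y ∈ G istar, lcb xhat ≤ lcb y) :
    Finset.univ.sup' Finset.univ_nonempty (fun i : ι => (G i).inf' (hGne i) f)
      - (G istar).inf' (hGne istar) f ≤ ucb xhat - lcb xhat := by
  have h1 : Finset.univ.sup' Finset.univ_nonempty (fun i : ι => (G i).inf' (hGne i) f)
      ≤ ucb xhat := by
    apply Finset.sup'_le
    intro i _
    calc (G i).inf' (hGne i) f ≤ (G i).inf' (hGne i) ucb :=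
          Finset.le_inf' _ _ fun x hx => (Finset.inf'_le f hx).trans (hconf x).2
      _ ≤ (G istar).inf' (hGne istar) ucb := histar i
      _ ≤ ucb xhat := Finset.inf'_le _ hxmem
  have h2 : lcb xhat ≤ (G istar).inf' (hGne istar) f := by
    apply Finset.le_inf'
    intro y hy
    exact (hxhat y hy).trans (hconf y).1
  linarith
end

section
/- Let D and Θ be nonempty finite sets and f, ucb, lcb : D × Θ → ℝ with lcb(x,θ) ≤ f(x,θ) ≤ ucb(x,θ) for all (x,θ). Suppose x_t maximizes x ↦ min_θ ucb(x,θ) and θ_t minimizes θ ↦ lcb(x_t, θ). Then max_{x ∈ D} min_{θ ∈ Θ} f(x,θ) − min_{θ ∈ Θ} f(x_t, θ) ≤ ucb(x_t,θ_t) − lcb(x_t,θ_t). -/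
/-!
Optimism bounds the max-min value of `f` by that of `ucb`, which `xt` attains, so it is at most
`ucb xt θt`; pessimism gives `lcb xt θt ≤ lcb xt θ ≤ f xt θ` for every `θ`, so `lcb xt θt` is at
most the min of `f xt`. Subtracting the two bounds gives the claim.
-/

open Finset

theorem Finset.sup'_inf'_le_inf'_of_le_of_forall_inf'_le {α β γ : Type*} [Lattice γ]
    {s : Finset α} {t : Finset β} (hs : s.Nonempty) (ht : t.Nonempty) {f u : α → β → γ}
    (hfu : ∀ x ∈ s, ∀ y ∈ t, f x y ≤ u x y) {x₀ : α}
    (hx₀ : ∀ x ∈ s, t.inf' ht (u x) ≤ t.inf' ht (u x₀)) :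
    s.sup' hs (fun x => t.inf' ht (f x)) ≤ t.inf' ht (u x₀) :=
  sup'_le _ _ fun x hx => (inf'_mono_fun (hfu x hx)).trans (hx₀ x hx)

/-- Per-round regret bound for the robustness-to-unknown-parameters variant of StableOpt. -/
theorem unknown_parameter_stableopt_regret
    {D Θ : Type*} [Fintype D] [Nonempty D] [Fintype Θ] [Nonempty Θ]
    (f ucb lcb : D → Θ → ℝ)
    (hconf : ∀ x θ, lcb x θ ≤ f x θ ∧ f x θ ≤ ucb x θ)
    (xt : D) (θt : Θ)
    (hxt : ∀ x : D,
      Finset.univ.inf' Finset.univ_nonempty (ucb x)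
        ≤ Finset.univ.inf' Finset.univ_nonempty (ucb xt))
    (hθt : ∀ θ : Θ, lcb xt θt ≤ lcb xt θ) :
    Finset.univ.sup' Finset.univ_nonempty
        (fun x : D => Finset.univ.inf' Finset.univ_nonempty (f x))
      - Finset.univ.inf' Finset.univ_nonempty (f xt)
      ≤ ucb xt θt - lcb xt θt := by
  have optimism := sup'_inf'_le_inf'_of_le_of_forall_inf'_le univ_nonempty univ_nonempty
    (fun x _ θ _ => (hconf x θ).2) fun x _ => hxt x
  have pessimism : lcb xt θt ≤ univ.inf' univ_nonempty (f xt) :=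
    le_inf' _ _ fun θ _ => (hθt θ).trans (hconf xt θ).1
  linarith [inf'_le (ucb xt) (mem_univ θt)]
end
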